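/- arXiv:1803.07117 — 6 statements merged into one kernel-verified Lean document; each statement's English description precedes it below -/
import Mathlib

section
/- Let n ≥ 1 and let X, Y be n×n complex matrices with 0 ≤ X ≤ Y ≤ I, Y positive definite, Tr X = p for some p with 1/100 < p < 99/100, and Tr Y = 1. Then ‖[X, ln(Y)]‖₁ ≤ 4·√(p(1−p)). -/
open scoped ComplexOrder

/-- The trace norm of a complex matrix: `Tr √(Aᴴ A)`, the sum of singular values. -/
noncomputable def traceNorm {n : ℕ} (A : Matrix (Fin n) (Fin n) ℂ) : ℝ :=
  ((Matrix.posSemidef_conjTranspose_mul_self A).1.eigenvectorUnitary.1 *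
    Matrix.diagonal ((fun x : ℝ => (x : ℂ)) ∘ (Real.sqrt ·) ∘ (Matrix.posSemidef_conjTranspose_mul_self A).1.eigenvalues) *
    (star (Matrix.posSemidef_conjTranspose_mul_self A).1.eigenvectorUnitary :
      Matrix (Fin n) (Fin n) ℂ)).trace.re

/-- For a Hermitian matrix `Y = Σⱼ yⱼ |φⱼ⟩⟨φⱼ|`, the matrix `f(Y) = Σⱼ f(yⱼ) |φⱼ⟩⟨φⱼ|`
(junk value `0` if `Y` is not Hermitian). -/
noncomputable def matFun {n : ℕ} (f : ℝ → ℝ) (Y : Matrix (Fin n) (Fin n) ℂ) :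
    Matrix (Fin n) (Fin n) ℂ :=
  if hY : Y.IsHermitian then
    (hY.eigenvectorUnitary : Matrix (Fin n) (Fin n) ℂ) *
      Matrix.diagonal (fun i => (f (hY.eigenvalues i) : ℂ)) *
      (star hY.eigenvectorUnitary : Matrix (Fin n) (Fin n) ℂ)
  else 0

/-!
Diagonalise `Y = U diag(y) U⋆`. In that basis `K = diag(y)^(-1/2) X diag(y)^(-1/2)` satisfies
`0 ≤ K ≤ 1`, hence `K² ≤ K`, and the entries of the commutator are
`[X, ln Y]ₖⱼ = √yₖ √yⱼ (ln yⱼ - ln yₖ) Kₖⱼ`, where `√a √b |ln a - ln b| ≤ |a - b|` (the logarithmic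
mean dominates the geometric one). The commutator is skew-Hermitian, so its trace norm is
`|Tr (W [X, ln Y])|` for a unitary `W`; splitting each term as
`|Wⱼₖ| (√yⱼ + √yₖ) · |Kₖⱼ| |√yⱼ - √yₖ|` and applying Cauchy–Schwarz gives
`‖[X, ln Y]‖₁ ≤ 2 √(2 Tr X)`. Since `Y` commutes with `ln Y`, the same bound for `Y - X` gives
`2 √(2 (1 - p))`, and `min (p, 1 - p) ≤ 2 p (1 - p)`.
-/

open Matrix
open scoped MatrixOrder

lemma Real.sqrt_mul_sqrt_mul_abs_log_sub_log_le {a b : ℝ} (ha : 0 < a) (hb : 0 < b) :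
    √a * √b * |log a - log b| ≤ |a - b| := by
  have hsa := sqrt_pos.2 ha
  have hsb := sqrt_pos.2 hb
  have ht : 0 < √a / √b := div_pos hsa hsb
  -- with `t = √a / √b` this is `|log t| ≤ |sinh (log t)|`
  have hlog : log a - log b = 2 * log (√a / √b) := by
    rw [log_div hsa.ne' hsb.ne', log_sqrt ha.le, log_sqrt hb.le]
    ring
  have hdiff : a - b = √a * √b * (2 * sinh (log (√a / √b))) := by
    rw [sinh_log ht]
    field_simp
    rw [sq_sqrt ha.le, sq_sqrt hb.le]
  rw [hlog, hdiff, abs_mul, abs_mul _ (2 * _), abs_of_pos (mul_pos hsa hsb), abs_mul _ (sinh _),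
    abs_sinh]
  gcongr
  exact self_le_sinh_iff.2 (abs_nonneg _)

lemma norm_sqrt_mul_mul_sqrt_mul_log_sub_log_le {a b : ℝ} (ha : 0 < a) (hb : 0 < b) (z : ℂ) :
    ‖(√b : ℂ) * z * √a * (Real.log a - Real.log b)‖ ≤ ‖z‖ * |√b - √a| * (√a + √b) := by
  have hdiff : |a - b| = |√b - √a| * (√a + √b) := by
    rw [abs_sub_comm, ← abs_of_nonneg (add_nonneg (Real.sqrt_nonneg a) (Real.sqrt_nonneg b)),
      ← abs_mul]
    congr 1
    linear_combination Real.sq_sqrt ha.le - Real.sq_sqrt hb.le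
  rw [← Complex.ofReal_sub]
  simp only [norm_mul, Complex.norm_real, Real.norm_eq_abs, abs_of_nonneg (Real.sqrt_nonneg _)]
  calc √b * ‖z‖ * √a * |Real.log a - Real.log b|
      = ‖z‖ * (√a * √b * |Real.log a - Real.log b|) := by ring
    _ ≤ ‖z‖ * |a - b| := by gcongr; exact Real.sqrt_mul_sqrt_mul_abs_log_sub_log_le ha hb
    _ = ‖z‖ * |√b - √a| * (√a + √b) := by rw [hdiff, mul_assoc]

lemma two_mul_sqrt_two_mul_le_four_mul_sqrt {p : ℝ} (hp0 : 0 ≤ p) (hp : p ≤ 1 / 2) :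
    2 * √(2 * p) ≤ 4 * √(p * (1 - p)) := by
  calc 2 * √(2 * p) = √(2 ^ 2 * (2 * p)) := by
        rw [Real.sqrt_mul (by norm_num : (0 : ℝ) ≤ 2 ^ 2), Real.sqrt_sq zero_le_two]
    _ ≤ √(4 ^ 2 * (p * (1 - p))) := Real.sqrt_le_sqrt (by nlinarith)
    _ = 4 * √(p * (1 - p)) := by
        rw [Real.sqrt_mul (by norm_num : (0 : ℝ) ≤ 4 ^ 2), Real.sqrt_sq zero_le_four]

lemma mul_self_le_self_of_nonneg_of_le_one {A : Type*} [Ring A] [StarRing A] [TopologicalSpace A]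
    [Algebra ℝ A] [ContinuousFunctionalCalculus ℝ A IsSelfAdjoint] [PartialOrder A]
    [StarOrderedRing A] [NonnegSpectrumClass ℝ A] [IsTopologicalRing A] [T2Space A]
    {a : A} (h0 : 0 ≤ a) (h1 : a ≤ 1) : a * a ≤ a := by
  obtain ⟨s, hs, rfl⟩ : ∃ s, 0 ≤ s ∧ s * s = a :=
    ⟨CFC.sqrt a, CFC.sqrt_nonneg a, CFC.sqrt_mul_sqrt_self a h0⟩
  have h := star_left_conjugate_le_conjugate h1 s
  rw [hs.isSelfAdjoint.star_eq, mul_one] at h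
  simpa only [mul_assoc] using h

namespace Matrix

variable {ι : Type*} [Fintype ι]

lemma IsHermitian.conjTranspose_commutator {A B : Matrix ι ι ℂ} (hA : A.IsHermitian)
    (hB : B.IsHermitian) : (A * B - B * A)ᴴ = -(A * B - B * A) := by
  rw [conjTranspose_sub, conjTranspose_mul, conjTranspose_mul, hA.eq, hB.eq, neg_sub]

lemma re_mul_conjTranspose_apply_self (A : Matrix ι ι ℂ) (i : ι) :
    ((A * Aᴴ) i i).re = ∑ k, ‖A i k‖ ^ 2 := by
  simp [mul_apply, Complex.mul_conj', ← Complex.ofReal_pow]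

lemma re_conjTranspose_mul_apply_self (A : Matrix ι ι ℂ) (k : ι) :
    ((Aᴴ * A) k k).re = ∑ j, ‖A j k‖ ^ 2 := by
  simp [mul_apply, Complex.conj_mul', ← Complex.ofReal_pow]

lemma sum_sum_norm_sq_mul_add (A : Matrix ι ι ℂ) (w : ι → ℝ) :
    ∑ j, ∑ k, ‖A j k‖ ^ 2 * (w j + w k) =
      ∑ j, w j * ((A * Aᴴ) j j).re + ∑ k, w k * ((Aᴴ * A) k k).re := by
  simp only [re_mul_conjTranspose_apply_self, re_conjTranspose_mul_apply_self, Finset.mul_sum,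
    mul_add, Finset.sum_add_distrib]
  rw [Finset.sum_comm (f := fun j k => ‖A j k‖ ^ 2 * w k)]
  simp only [mul_comm]

lemma IsHermitian.sum_sum_sq_norm_mul_sqrt_sub_sqrt_le {K : Matrix ι ι ℂ} (hK : K.IsHermitian)
    (hKK : K * K ≤ K) {y : ι → ℝ} (hy : ∀ j, 0 ≤ y j) :
    ∑ j, ∑ k, (‖K j k‖ * |√(y j) - √(y k)|) ^ 2 ≤ 2 * ∑ j, y j * (K j j).re := by
  have hdiag (j : ι) : ((K * K) j j).re ≤ (K j j).re := by
    have := (le_iff.1 hKK).diag_nonneg (i := j)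
    rw [sub_apply, Complex.nonneg_iff] at this
    simpa using this.1
  have hsum : ∑ j, y j * ((K * K) j j).re ≤ ∑ j, y j * (K j j).re :=
    Finset.sum_le_sum fun j _ => mul_le_mul_of_nonneg_left (hdiag j) (hy j)
  calc ∑ j, ∑ k, (‖K j k‖ * |√(y j) - √(y k)|) ^ 2
      ≤ ∑ j, ∑ k, ‖K j k‖ ^ 2 * (y j + y k) := by
        gcongr with j _ k _
        rw [mul_pow, sq_abs]
        gcongr
        nlinarith [Real.sq_sqrt (hy j), Real.sq_sqrt (hy k),
          mul_nonneg (Real.sqrt_nonneg (y j)) (Real.sqrt_nonneg (y k))]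
    _ ≤ 2 * ∑ j, y j * (K j j).re := by
        rw [sum_sum_norm_sq_mul_add, hK.eq, two_mul]
        exact add_le_add hsum hsum

variable [DecidableEq ι]

lemma trace_mul_commutator_diagonal (W X : Matrix ι ι ℂ) (d : ι → ℂ) :
    (W * (X * diagonal d - diagonal d * X)).trace = ∑ j, ∑ k, W j k * (X k j * (d j - d k)) := by
  simp only [trace, diag, mul_apply (M := W), sub_apply, mul_diagonal, diagonal_mul, mul_sub]
  exact Finset.sum_congr rfl fun j _ => Finset.sum_congr rfl fun k _ => by ring

lemma sum_sum_sq_norm_mul_sqrt_add_sqrt_le_of_mem_unitary {W : Matrix ι ι ℂ}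
    (hW : W ∈ unitary (Matrix ι ι ℂ)) {y : ι → ℝ} (hy : ∀ j, 0 ≤ y j) :
    ∑ j, ∑ k, (‖W j k‖ * (√(y j) + √(y k))) ^ 2 ≤ 4 * ∑ j, y j := by
  calc ∑ j, ∑ k, (‖W j k‖ * (√(y j) + √(y k))) ^ 2
      ≤ ∑ j, ∑ k, ‖W j k‖ ^ 2 * (2 * y j + 2 * y k) := by
        gcongr with j _ k _
        rw [mul_pow]
        gcongr
        nlinarith [Real.sq_sqrt (hy j), Real.sq_sqrt (hy k), sq_nonneg (√(y j) - √(y k))]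
    _ = 4 * ∑ j, y j := by
        rw [sum_sum_norm_sq_mul_add, ← star_eq_conjTranspose, Unitary.mul_star_self_of_mem hW,
          Unitary.star_mul_self_of_mem hW]
        simp only [one_apply_eq, Complex.one_re, mul_one, ← Finset.mul_sum]
        ring

lemma IsHermitian.exists_mem_unitary_mul_eq_abs {H : Matrix ι ι ℂ} (hH : H.IsHermitian) :
    ∃ W ∈ unitary (Matrix ι ι ℂ), W * H = CFC.abs H := by
  have hcont (f : ℝ → ℝ) : ContinuousOn f (spectrum ℝ H) := H.finite_real_spectrum.continuousOn f
  refine ⟨cfc (fun x : ℝ => if 0 ≤ x then (1 : ℝ) else -1) H, ?_, ?_⟩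
  · rw [cfc_unitary_iff _ _ hH.isSelfAdjoint (hcont _)]
    intro x _
    split_ifs <;> norm_num
  · rw [CFC.abs_eq_cfc_norm H hH.isSelfAdjoint]
    nth_rw 2 [← cfc_id ℝ H hH.isSelfAdjoint]
    rw [← cfc_mul _ _ H (hcont _) (hcont _)]
    congr 1
    funext x
    split_ifs with hx
    · simp [abs_of_nonneg hx]
    · simp [abs_of_neg (not_le.mp hx)]

lemma exists_mem_unitary_mul_eq_abs_of_conjTranspose_eq_neg {C : Matrix ι ι ℂ}
    (hC : Cᴴ = -C) : ∃ W ∈ unitary (Matrix ι ι ℂ), W * C = CFC.abs C := by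
  have hH : (Complex.I • C).IsHermitian := by
    rw [IsHermitian, conjTranspose_smul, hC]
    simp
  obtain ⟨W, hW, hWH⟩ := hH.exists_mem_unitary_mul_eq_abs
  refine ⟨Complex.I • W, Unitary.smul_mem_of_mem (by simp [Unitary.mem_iff]) hW, ?_⟩
  rw [smul_mul_assoc, ← mul_smul_comm, hWH, CFC.abs_smul]
  simp

lemma trace_conjStarAlgAut (U : unitary (Matrix ι ι ℂ)) (A : Matrix ι ι ℂ) :
    (Unitary.conjStarAlgAut ℂ _ U A).trace = A.trace := by
  rw [Unitary.conjStarAlgAut_apply, trace_mul_cycle, Unitary.coe_star_mul_self, one_mul]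

lemma exists_isHermitian_mul_self_le_of_le_diagonal {y : ι → ℝ} (hy : ∀ j, 0 < y j)
    {X : Matrix ι ι ℂ} (hX : X.PosSemidef) (hXy : (diagonal (fun j => (y j : ℂ)) - X).PosSemidef) :
    ∃ K : Matrix ι ι ℂ, K.IsHermitian ∧ K * K ≤ K ∧ ∀ j k, X j k = √(y j) * K j k * √(y k) := by
  set E : Matrix ι ι ℂ := diagonal fun j => ((√(y j))⁻¹ : ℝ)
  have hE : Eᴴ = E := by simp [E]
  have hsqrt (j : ι) : (√(y j) : ℂ) ≠ 0 := Complex.ofReal_ne_zero.2 (Real.sqrt_pos.2 (hy j)).ne'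
  have hEyE : E * diagonal (fun j => (y j : ℂ)) * E = 1 := by
    rw [diagonal_mul_diagonal, diagonal_mul_diagonal, ← diagonal_one]
    congr 1
    funext j
    have := hsqrt j
    have hy' : (y j : ℂ) = √(y j) * √(y j) := by exact_mod_cast (Real.mul_self_sqrt (hy j).le).symm
    rw [hy', Complex.ofReal_inv]
    field_simp
  have hK0 : (E * X * E).PosSemidef := by
    simpa [hE] using hX.mul_mul_conjTranspose_same E
  have hK1 : E * X * E ≤ 1 := by
    have := hXy.mul_mul_conjTranspose_same E
    rwa [hE, mul_sub, sub_mul, hEyE] at this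
  refine ⟨E * X * E, hK0.isHermitian, mul_self_le_self_of_nonneg_of_le_one hK0.nonneg hK1,
    fun j k => ?_⟩
  have := hsqrt j
  have := hsqrt k
  simp only [E, mul_diagonal, diagonal_mul]
  push_cast
  field_simp

lemma norm_trace_mul_commutator_diagonal_log_le {y : ι → ℝ} (hy : ∀ j, 0 < y j)
    (hy1 : ∑ j, y j ≤ 1) {X W : Matrix ι ι ℂ} (hX : X.PosSemidef)
    (hXy : (diagonal (fun j => (y j : ℂ)) - X).PosSemidef) (hW : W ∈ unitary (Matrix ι ι ℂ)) :
    ‖(W * (X * diagonal (fun j => (Real.log (y j) : ℂ)) -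
      diagonal (fun j => (Real.log (y j) : ℂ)) * X)).trace‖ ≤ 2 * √(2 * X.trace.re) := by
  obtain ⟨K, hK, hKK, hXK⟩ := exists_isHermitian_mul_self_le_of_le_diagonal hy hX hXy
  set s : ι → ℝ := fun j => √(y j)
  set f : ι → ι → ℝ := fun j k => ‖W j k‖ * (s j + s k)
  set g : ι → ι → ℝ := fun j k => ‖K k j‖ * |s k - s j|
  have hterm (j k : ι) :
      ‖W j k * (X k j * (Real.log (y j) - Real.log (y k)))‖ ≤ f j k * g j k := by
    rw [norm_mul, hXK]
    calc _ ≤ ‖W j k‖ * (‖K k j‖ * |s k - s j| * (s j + s k)) := by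
          gcongr
          exact norm_sqrt_mul_mul_sqrt_mul_log_sub_log_le (hy j) (hy k) _
      _ = f j k * g j k := by ring
  have hf : ∑ j, ∑ k, f j k ^ 2 ≤ 4 := by
    have := sum_sum_sq_norm_mul_sqrt_add_sqrt_le_of_mem_unitary hW fun j => (hy j).le
    linarith
  have hg : ∑ j, ∑ k, g j k ^ 2 ≤ 2 * X.trace.re := by
    have hXdiag (k : ι) : (X k k).re = y k * (K k k).re := by
      rw [hXK, mul_comm _ (√(y k) : ℂ), ← mul_assoc, ← Complex.ofReal_mul,
        Real.mul_self_sqrt (hy k).le, Complex.re_ofReal_mul]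
    rw [Finset.sum_comm]
    simpa only [trace, diag, Complex.re_sum, hXdiag] using
      hK.sum_sum_sq_norm_mul_sqrt_sub_sqrt_le hKK fun j => (hy j).le
  rw [trace_mul_commutator_diagonal]
  calc _ ≤ ∑ j, ∑ k, f j k * g j k :=
        (norm_sum_le _ _).trans <| Finset.sum_le_sum fun j _ =>
          (norm_sum_le _ _).trans <| Finset.sum_le_sum fun k _ => hterm j k
    _ ≤ √(∑ j, ∑ k, f j k ^ 2) * √(∑ j, ∑ k, g j k ^ 2) := by
        simpa only [Finset.sum_product] using Real.sum_mul_le_sqrt_mul_sqrt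
          (Finset.univ ×ˢ Finset.univ) (fun x => f x.1 x.2) (fun x => g x.1 x.2)
    _ ≤ √(2 ^ 2) * √(2 * X.trace.re) := by gcongr; linarith
    _ = 2 * √(2 * X.trace.re) := by rw [Real.sqrt_sq zero_le_two]

end Matrix

section TraceNorm

variable {n : ℕ}

lemma traceNorm_eq_re_trace_abs (A : Matrix (Fin n) (Fin n) ℂ) :
    traceNorm A = (CFC.abs A).trace.re := by
  change _ = (CFC.sqrt (Aᴴ * A)).trace.re
  have hA := posSemidef_conjTranspose_mul_self A
  rw [traceNorm, CFC.sqrt_eq_cfc, cfc_nnreal_eq_real _ (Aᴴ * A) hA.nonneg, hA.1.cfc_eq,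
    IsHermitian.cfc, Unitary.conjStarAlgAut_apply]
  congr 3
  simp only [Real.sqrt]
  rfl

lemma traceNorm_neg (A : Matrix (Fin n) (Fin n) ℂ) : traceNorm (-A) = traceNorm A := by
  rw [traceNorm_eq_re_trace_abs, traceNorm_eq_re_trace_abs, CFC.abs_neg]

lemma traceNorm_le_of_conjTranspose_eq_neg {C : Matrix (Fin n) (Fin n) ℂ} (hC : Cᴴ = -C) {b : ℝ}
    (hb : ∀ W ∈ unitary (Matrix (Fin n) (Fin n) ℂ), ‖(W * C).trace‖ ≤ b) : traceNorm C ≤ b := by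
  obtain ⟨W, hW, hWC⟩ := exists_mem_unitary_mul_eq_abs_of_conjTranspose_eq_neg hC
  rw [traceNorm_eq_re_trace_abs, ← hWC]
  exact (Complex.re_le_norm _).trans (hb W hW)

lemma matFun_eq_cfc {Y : Matrix (Fin n) (Fin n) ℂ} (hY : Y.IsHermitian) (f : ℝ → ℝ) :
    matFun f Y = cfc f Y := by
  rw [matFun, dif_pos hY, hY.cfc_eq, IsHermitian.cfc]
  rfl

lemma norm_trace_mul_commutator_matFun_log_le {X Y W : Matrix (Fin n) (Fin n) ℂ}
    (hY : Y.PosDef) (hTrY : Y.trace.re ≤ 1) (hX : X.PosSemidef) (hXY : (Y - X).PosSemidef)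
    (hW : W ∈ unitary (Matrix (Fin n) (Fin n) ℂ)) :
    ‖(W * (X * matFun Real.log Y - matFun Real.log Y * X)).trace‖ ≤ 2 * √(2 * X.trace.re) := by
  have hYH := hY.isHermitian
  set y := hYH.eigenvalues
  set ψ := (Unitary.conjStarAlgAut ℂ (Matrix (Fin n) (Fin n) ℂ) hYH.eigenvectorUnitary).symm
    with hψ
  have hψY : ψ Y = diagonal fun j => (y j : ℂ) := by
    rw [hψ, Unitary.conjStarAlgAut_symm]
    exact hYH.conjStarAlgAut_star_eigenvectorUnitary
  have hψL : ψ (matFun Real.log Y) = diagonal fun j => (Real.log (y j) : ℂ) := by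
    rw [matFun, dif_pos hYH, ← Unitary.conjStarAlgAut_apply (S := ℂ)]
    exact StarAlgEquiv.symm_apply_apply _ _
  have htr (A : Matrix (Fin n) (Fin n) ℂ) : (ψ A).trace = A.trace := by
    rw [hψ, Unitary.conjStarAlgAut_symm, trace_conjStarAlgAut]
  have hy1 : ∑ j, y j ≤ 1 := by
    simpa [hYH.trace_eq_sum_eigenvalues, ← Complex.ofReal_sum] using hTrY
  have hXψ : (ψ X).PosSemidef := (map_nonneg ψ hX.nonneg).posSemidef
  have hXYψ : (diagonal (fun j => (y j : ℂ)) - ψ X).PosSemidef := by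
    rw [← hψY, ← map_sub]
    exact (map_nonneg ψ hXY.nonneg).posSemidef
  have key := norm_trace_mul_commutator_diagonal_log_le hY.eigenvalues_pos hy1 hXψ hXYψ
    (Unitary.map_mem ψ hW)
  rwa [← hψL, ← map_mul, ← map_mul, ← map_sub, ← map_mul, htr, htr] at key

lemma traceNorm_commutator_matFun_log_le {X Y : Matrix (Fin n) (Fin n) ℂ}
    (hY : Y.PosDef) (hTrY : Y.trace.re ≤ 1) (hX : X.PosSemidef) (hXY : (Y - X).PosSemidef) :
    traceNorm (X * matFun Real.log Y - matFun Real.log Y * X) ≤ 2 * √(2 * X.trace.re) := by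
  have hL : (matFun Real.log Y).IsHermitian := by
    rw [matFun_eq_cfc hY.isHermitian]
    exact cfc_predicate _ _
  exact traceNorm_le_of_conjTranspose_eq_neg (hX.isHermitian.conjTranspose_commutator hL)
    fun W hW => norm_trace_mul_commutator_matFun_log_le hY hTrY hX hXY hW

end TraceNorm

theorem mixing_rate_lieb_vershynina_general {n : ℕ}
    (X Y : Matrix (Fin n) (Fin n) ℂ) (p : ℝ)
    (hX : X.PosSemidef) (hXY : (Y - X).PosSemidef)
    (hY : Y.PosDef)
    (hTrX : X.trace = (p : ℂ)) (hTrY : Y.trace = 1) :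
    traceNorm (X * matFun Real.log Y - matFun Real.log Y * X) ≤
      4 * Real.sqrt (p * (1 - p)) := by
  have hTrY' : Y.trace.re ≤ 1 := by simp [hTrY]
  have hYX : (Y - (Y - X)).PosSemidef := by rwa [sub_sub_cancel]
  have hcomm : Commute Y (matFun Real.log Y) := by
    rw [matFun_eq_cfc hY.isHermitian]
    simpa only [cfc_id' ℝ Y] using cfc_commute_cfc (fun x => x) Real.log Y
  have hp0 : 0 ≤ p := by simpa [hTrX] using hX.trace_nonneg
  have hp1 : p ≤ 1 := by
    have := hXY.trace_nonneg
    rw [trace_sub, hTrX, hTrY, sub_nonneg] at this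
    exact_mod_cast this
  have hbound₁ := traceNorm_commutator_matFun_log_le hY hTrY' hX hXY
  have hbound₂ := traceNorm_commutator_matFun_log_le hY hTrY' hXY hYX
  rw [hTrX, Complex.ofReal_re] at hbound₁
  rw [sub_mul, mul_sub, hcomm.eq, sub_sub_sub_cancel_left, ← neg_sub, traceNorm_neg, trace_sub,
    hTrX, hTrY, ← Complex.ofReal_one, ← Complex.ofReal_sub, Complex.ofReal_re] at hbound₂
  rcases le_total p (1 / 2) with hp | hp
  · exact hbound₁.trans (two_mul_sqrt_two_mul_le_four_mul_sqrt hp0 hp)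
  · have := two_mul_sqrt_two_mul_le_four_mul_sqrt (sub_nonneg.2 hp1) (by linarith)
    rw [sub_sub_cancel, mul_comm (1 - p)] at this
    exact hbound₂.trans this

theorem mixing_rate_lieb_vershynina {n : ℕ} (hn : 1 ≤ n)
    (X Y : Matrix (Fin n) (Fin n) ℂ) (p : ℝ) (hp0 : 1 / 100 < p) (hp1 : p < 99 / 100)
    (hX : X.PosSemidef) (hXY : (Y - X).PosSemidef)
    (hYI : ((1 : Matrix (Fin n) (Fin n) ℂ) - Y).PosSemidef) (hY : Y.PosDef)
    (hTrX : X.trace = (p : ℂ)) (hTrY : Y.trace = 1) :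
    traceNorm (X * matFun Real.log Y - matFun Real.log Y * X) ≤
      4 * Real.sqrt (p * (1 - p)) :=
  mixing_rate_lieb_vershynina_general X Y p hX hXY hY hTrX hTrY
end

section
/- Let β > 0 and let p ∈ (0,1) satisfy p^β < β + 1 − √((β+1)² − 1). Then for all real numbers x, y with 0 < y < x ≤ 1: if x^β − y^β > 1 − p^β, then x^(−1/2) · y^(1/2) · (x^β − y^β) ≤ p^(1/2) · (1 − p^β). In other words, the function f(t) = t^β satisfies Assumption A at parameter p. -/
/-!
With `t = x^β`, `u = y^β`, `q = p^β` and `s = 1/(2β)` the claim reads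
`t^(-s) u^s (t - u) ≤ q^s (1 - q)`. The function `u ↦ u^s (t - u)` increases as long as
`u ≤ s (t - u)`, and the gap condition forces `u ≤ m := t - (1 - q)`; the hypothesis on `p`
gives `2βq < (1 - q)²`, which makes `m ≤ s (t - m)`. Hence `u^s (t - u) ≤ m^s (1 - q)`, and
`m / t ≤ q` because `t ≤ 1`.
-/

open Real

lemma rpow_mul_one_add_mul_one_sub_le_one {r s : ℝ} (hr : 0 < r) (hs : 0 ≤ s) :
    r ^ s * (1 + s * (1 - r)) ≤ 1 := by
  have hpow : r ^ s ≤ exp (s * (r - 1)) := by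
    rw [rpow_def_of_pos hr, mul_comm]
    exact exp_le_exp.2 (mul_le_mul_of_nonneg_left (log_le_sub_one_of_pos hr) hs)
  have hlin : 1 + s * (1 - r) ≤ exp (s * (1 - r)) := by
    linarith [add_one_le_exp (s * (1 - r))]
  have hprod : exp (s * (r - 1)) * exp (s * (1 - r)) = 1 := by
    rw [← exp_add]; ring_nf; exact exp_zero
  rcases le_total (1 + s * (1 - r)) 0 with hneg | hnonneg
  · nlinarith [rpow_nonneg hr.le s]
  · calc r ^ s * (1 + s * (1 - r)) ≤ exp (s * (r - 1)) * exp (s * (1 - r)) :=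
          mul_le_mul hpow hlin hnonneg (exp_nonneg _)
      _ = 1 := hprod

lemma rpow_mul_sub_le_rpow_mul_sub {s t u m : ℝ} (hs : 0 ≤ s) (hu : 0 < u) (hum : u ≤ m)
    (hm : m ≤ s * (t - m)) : u ^ s * (t - u) ≤ m ^ s * (t - m) := by
  have hm0 : 0 < m := hu.trans_le hum
  have htm : 0 ≤ t - m := by nlinarith
  set r := u / m
  have hr : 0 < r := div_pos hu hm0
  have hu_eq : u = r * m := (div_mul_cancel₀ u hm0.ne').symm
  have hsplit : t - u ≤ (t - m) * (1 + s * (1 - r)) := by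
    have : m * (m - u) ≤ s * (t - m) * (m - u) :=
      mul_le_mul_of_nonneg_right hm (by linarith)
    nlinarith
  calc u ^ s * (t - u) = m ^ s * (r ^ s * (t - u)) := by
        rw [hu_eq, mul_rpow hr.le hm0.le]; ring
    _ ≤ m ^ s * (r ^ s * ((t - m) * (1 + s * (1 - r)))) := by gcongr
    _ = m ^ s * (t - m) * (r ^ s * (1 + s * (1 - r))) := by ring
    _ ≤ m ^ s * (t - m) * 1 := by
        gcongr
        exact rpow_mul_one_add_mul_one_sub_le_one hr hs
    _ = m ^ s * (t - m) := mul_one _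

lemma rpow_neg_mul_rpow_mul_sub_le {s t u q : ℝ} (hs : 0 ≤ s) (hq : q ≤ s * (1 - q))
    (hu : 0 < u) (ht : t ≤ 1) (hgap : 1 - q < t - u) :
    t ^ (-s) * u ^ s * (t - u) ≤ q ^ s * (1 - q) := by
  have hq1 : q ≤ 1 := by nlinarith
  set m := t - (1 - q)
  have hm : 0 < m := by linarith
  have ht0 : 0 < t := by linarith
  have hmt : m / t ≤ q := by rw [div_le_iff₀ ht0]; nlinarith
  have hmono : u ^ s * (t - u) ≤ m ^ s * (t - m) :=
    rpow_mul_sub_le_rpow_mul_sub hs hu (by linarith) (by simp only [m]; linarith)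
  calc t ^ (-s) * u ^ s * (t - u) = t ^ (-s) * (u ^ s * (t - u)) := mul_assoc _ _ _
    _ ≤ t ^ (-s) * (m ^ s * (t - m)) := by gcongr
    _ = (m / t) ^ s * (1 - q) := by
        rw [div_rpow hm.le ht0.le, rpow_neg ht0.le]; simp only [m]; ring
    _ ≤ q ^ s * (1 - q) := by gcongr

lemma two_mul_mul_lt_one_sub_sq_of_lt_sub_sqrt {b q : ℝ}
    (h : q < b + 1 - √((b + 1) ^ 2 - 1)) : 2 * b * q < (1 - q) ^ 2 := by
  have hpos : 0 < b + 1 - q := by linarith [sqrt_nonneg ((b + 1) ^ 2 - 1)]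
  have := (sqrt_lt' hpos).1 (by linarith)
  nlinarith

/-- The power function `f(t) = t^β`, `β > 0`, satisfies Assumption A at parameter `p`
whenever `p^β < β + 1 - √((β+1)² - 1)`. -/
theorem rpow_pos_satisfies_assumption (β : ℝ) (hβ : 0 < β)
    (p : ℝ) (hp0 : 0 < p) (hp1 : p < 1)
    (hpβ : p ^ β < β + 1 - Real.sqrt ((β + 1) ^ 2 - 1)) :
    ∀ x y : ℝ, 0 < y → y < x → x ≤ 1 →
      x ^ β - y ^ β > 1 - p ^ β →
      x ^ (-(1 / 2) : ℝ) * y ^ ((1 / 2) : ℝ) * (x ^ β - y ^ β) ≤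
        p ^ ((1 / 2) : ℝ) * (1 - p ^ β) := by
  intro x y hy hyx hx1 hgap
  have hx0 : 0 < x := hy.trans hyx
  have hq1 : p ^ β < 1 := rpow_lt_one hp0.le hp1 hβ
  have hq : p ^ β ≤ (2 * β)⁻¹ * (1 - p ^ β) := by
    rw [inv_mul_eq_div, le_div_iff₀ (by positivity)]
    nlinarith [two_mul_mul_lt_one_sub_sq_of_lt_sub_sqrt hpβ]
  have key := rpow_neg_mul_rpow_mul_sub_le (by positivity) hq (rpow_pos_of_pos hy β)
    (rpow_le_one hx0.le hx1 hβ.le) hgap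
  have hhalf : β * (2 * β)⁻¹ = 1 / 2 := by field_simp
  have hneg_half : β * -(2 * β)⁻¹ = -(1 / 2) := by rw [mul_neg, hhalf]
  rwa [← rpow_mul hx0.le, ← rpow_mul hy.le, ← rpow_mul hp0.le, hhalf, hneg_half] at key
end

section
/- Let β > 0 and let q ∈ (0,1) satisfy q < β + 1 − √((β+1)² − 1). Then for every real t with 0 < t < q, one has t·(1−t)^(2β)/(t + 1 − q) < q·(1−q)^(2β). -/
/-!
For `c = 2β` the function `x ↦ x (1 - x)^c / (x + 1 - q)` is strictly increasing on `[0, q]`,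
and at `x = q` it equals `q (1 - q)^c`. The sign of its derivative is that of
`(1 - x)(1 - q) - c x (x + 1 - q)`, which on `(0, q)` exceeds `(1 - q)^2 - c q`; this is
nonnegative because the hypothesis on `q` places it below the smaller root of
`q^2 - 2(β + 1) q + 1`, i.e. `(1 - q)^2 > 2βq`.
-/

open Real Set

noncomputable def powRatio (q c x : ℝ) : ℝ := x * (1 - x) ^ c / (x + 1 - q)

lemma powRatio_self (q c : ℝ) : powRatio q c q = q * (1 - q) ^ c := by
  simp [powRatio]

lemma two_mul_mul_lt_one_sub_sq {β q : ℝ} (hβ : 0 ≤ β)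
    (hq : q < β + 1 - √((β + 1) ^ 2 - 1)) : 2 * β * q < (1 - q) ^ 2 := by
  have hsq : √((β + 1) ^ 2 - 1) ^ 2 = (β + 1) ^ 2 - 1 := sq_sqrt (by nlinarith)
  have hroot : √((β + 1) ^ 2 - 1) < β + 1 - q := by linarith
  nlinarith [sqrt_nonneg ((β + 1) ^ 2 - 1)]

lemma hasDerivAt_powRatio {q c x : ℝ} (hx : x < 1) (hxq : x + 1 - q ≠ 0) :
    HasDerivAt (powRatio q c)
      ((1 - x) ^ (c - 1) * ((1 - x) * (1 - q) - c * x * (x + 1 - q)) / (x + 1 - q) ^ 2) x := by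
  have h1x : 0 < 1 - x := by linarith
  have hpow : HasDerivAt (fun y : ℝ => (1 - y) ^ c) (-1 * c * (1 - x) ^ (c - 1)) x :=
    ((hasDerivAt_id x).const_sub 1).rpow_const (Or.inl h1x.ne')
  have hden : HasDerivAt (fun y : ℝ => y + 1 - q) 1 x :=
    ((hasDerivAt_id x).add_const 1).sub_const q
  refine (((hasDerivAt_id x).mul hpow).div hden hxq).congr_deriv ?_
  have hsplit : (1 - x) ^ c = (1 - x) ^ (c - 1) * (1 - x) := by
    rw [← rpow_add_one h1x.ne']; ring_nf
  simp only [Pi.mul_apply, id, hsplit]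
  field_simp
  ring

lemma powRatio_deriv_numerator_pos {q c x : ℝ} (hc : 0 ≤ c) (hcq : c * q ≤ (1 - q) ^ 2)
    (hq : q < 1) (hx0 : 0 < x) (hxq : x < q) : 0 < (1 - x) * (1 - q) - c * x * (x + 1 - q) := by
  have hfirst : (1 - q) ^ 2 < (1 - x) * (1 - q) := by nlinarith
  have hsecond : c * (x * (x + 1 - q)) ≤ c * q :=
    mul_le_mul_of_nonneg_left (by nlinarith) hc
  nlinarith

lemma strictMonoOn_powRatio {q c : ℝ} (hc : 0 ≤ c) (hcq : c * q ≤ (1 - q) ^ 2) (hq : q < 1) :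
    StrictMonoOn (powRatio q c) (Icc 0 q) := by
  have hderiv : ∀ x ∈ Icc 0 q, HasDerivAt (powRatio q c)
      ((1 - x) ^ (c - 1) * ((1 - x) * (1 - q) - c * x * (x + 1 - q)) / (x + 1 - q) ^ 2) x :=
    fun x hx => hasDerivAt_powRatio (by linarith [hx.2]) (by linarith [hx.1])
  refine strictMonoOn_of_hasDerivWithinAt_pos (convex_Icc 0 q)
    (fun x hx => (hderiv x hx).continuousAt.continuousWithinAt)
    (fun x hx => (hderiv x (interior_subset hx)).hasDerivWithinAt) fun x hx => ?_
  rw [interior_Icc] at hx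
  have h1x : 0 < 1 - x := by linarith [hx.2]
  have hden : 0 < x + 1 - q := by linarith [hx.1]
  have hnum := powRatio_deriv_numerator_pos hc hcq hq hx.1 hx.2
  positivity

theorem h_beta_lt (β : ℝ) (hβ : 0 < β) (q : ℝ) (hq0 : 0 < q) (hq1 : q < 1)
    (hq : q < β + 1 - Real.sqrt ((β + 1) ^ 2 - 1)) :
    ∀ t : ℝ, 0 < t → t < q →
      t * (1 - t) ^ (2 * β) / (t + 1 - q) < q * (1 - q) ^ (2 * β) := by
  intro t ht0 htq
  have hmono := strictMonoOn_powRatio (by positivity) (two_mul_mul_lt_one_sub_sq hβ.le hq).le hq1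
  have := hmono ⟨ht0.le, htq.le⟩ ⟨hq0.le, le_rfl⟩ htq
  rwa [powRatio_self] at this
end

section
/- Let β > 0 and q ∈ (0,1), and set t₀ = (1/(4β))·(√((2β+1)²(1−q)² + 8β(1−q)) − (2β+1)(1−q)). Then 0 < t₀ < 1, and the function h(t) = t·(1−t)^(2β)/(t + 1 − q) is monotonically increasing on [0, t₀] and monotonically decreasing on [t₀, 1]. -/
/-!
Up to the positive factor `(1 - t) ^ (2β - 1) / (t + 1 - q) ^ 2`, the derivative of `h` is the
quadratic `P(t) = (1 - q) - 2β t² - (2β + 1)(1 - q) t`, whose positive root is `t₀`. Since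
`P(t₀) = 0`, it factors as `P(t) = (t₀ - t) (2β (t₀ + t) + (2β + 1)(1 - q))`, and the second
factor is positive for `t ≥ 0`; so `h'` has the sign of `t₀ - t` on `[0, 1)`. The same
factorization at `t = 1`, where `P(1) = -2β (2 - q) < 0`, gives `t₀ < 1`.
-/

open Set

noncomputable section

def hBeta (β q t : ℝ) : ℝ := t * (1 - t) ^ (2 * β) / (t + 1 - q)

def critPoly (β q t : ℝ) : ℝ := (1 - q) - 2 * β * t ^ 2 - (2 * β + 1) * (1 - q) * t

def critPt (β q : ℝ) : ℝ :=
  (1 / (4 * β)) *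
    (Real.sqrt ((2 * β + 1) ^ 2 * (1 - q) ^ 2 + 8 * β * (1 - q)) - (2 * β + 1) * (1 - q))

def hBetaDeriv (β q t : ℝ) : ℝ := (1 - t) ^ (2 * β - 1) / (t + 1 - q) ^ 2 * critPoly β q t

end

section Derivative

variable {β q t : ℝ}

theorem hasDerivAt_hBeta (ht : t < 1) (hq : t + 1 - q ≠ 0) :
    HasDerivAt (hBeta β q) (hBetaDeriv β q t) t := by
  have h1t : 1 - t ≠ 0 := by linarith
  have hpow : HasDerivAt (fun t : ℝ => (1 - t) ^ (2 * β))
      (2 * β * (1 - t) ^ (2 * β - 1) * (-1)) t :=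
    (Real.hasDerivAt_rpow_const (Or.inl h1t)).comp t ((hasDerivAt_id' t).const_sub 1)
  have hden : HasDerivAt (fun t : ℝ => t + 1 - q) 1 t :=
    ((hasDerivAt_id' t).add_const 1).sub_const q
  refine (((hasDerivAt_id' t).mul hpow).div hden hq).congr_deriv ?_
  have hsplit : (1 - t) ^ (2 * β) = (1 - t) ^ (2 * β - 1) * (1 - t) := by
    rw [← Real.rpow_add_one h1t]
    ring_nf
  rw [Pi.mul_apply, hsplit, hBetaDeriv, critPoly]
  field_simp
  ring

theorem continuousOn_hBeta (hβ : 0 ≤ β) (hq : q < 1) : ContinuousOn (hBeta β q) (Icc 0 1) := by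
  have hpow : Continuous fun t : ℝ => (1 - t) ^ (2 * β) :=
    (Real.continuous_rpow_const (by positivity)).comp (continuous_const.sub continuous_id)
  refine ContinuousOn.div (by fun_prop) (by fun_prop) fun t ht => ?_
  linarith [ht.1]

end Derivative

section CriticalPoint

variable {β q : ℝ}

theorem critPoly_critPt (hβ : β ≠ 0)
    (hdisc : 0 ≤ (2 * β + 1) ^ 2 * (1 - q) ^ 2 + 8 * β * (1 - q)) :
    critPoly β q (critPt β q) = 0 := by
  have hsq := Real.sq_sqrt hdisc
  set s := Real.sqrt ((2 * β + 1) ^ 2 * (1 - q) ^ 2 + 8 * β * (1 - q))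
  have h4 : 4 * β * critPt β q = s - (2 * β + 1) * (1 - q) := by
    rw [critPt, one_div, mul_inv_cancel_left₀ (mul_ne_zero four_ne_zero hβ)]
  have h8 : 8 * β * critPoly β q (critPt β q) = 0 := by
    rw [critPoly]
    linear_combination (-(4 * β * critPt β q + (2 * β + 1) * (1 - q) + s)) * h4 - hsq
  simpa [hβ] using h8

variable (hβ : 0 < β) (hq : q < 1)
include hβ hq

theorem critPoly_eq_mul (t : ℝ) :
    critPoly β q t =
      (critPt β q - t) * (2 * β * (critPt β q + t) + (2 * β + 1) * (1 - q)) := by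
  have hc : 0 < 1 - q := by linarith
  have h₀ := critPoly_critPt (q := q) hβ.ne' (by positivity)
  rw [critPoly] at h₀ ⊢
  linear_combination h₀

theorem critPt_pos : 0 < critPt β q := by
  have hc : 0 < 1 - q := by linarith
  have hlt : (2 * β + 1) * (1 - q) <
      Real.sqrt ((2 * β + 1) ^ 2 * (1 - q) ^ 2 + 8 * β * (1 - q)) := by
    refine Real.lt_sqrt_of_sq_lt ?_
    nlinarith [mul_pos hβ hc]
  rw [critPt]
  have := sub_pos.mpr hlt
  positivity

theorem critPoly_cofactor_pos {t : ℝ} (ht : 0 ≤ t) :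
    0 < 2 * β * (critPt β q + t) + (2 * β + 1) * (1 - q) := by
  have h₁ : 0 < 2 * β * (critPt β q + t) :=
    mul_pos (by linarith) (by linarith [critPt_pos hβ hq])
  have h₂ : 0 < (2 * β + 1) * (1 - q) := mul_pos (by linarith) (by linarith)
  linarith

theorem critPt_lt_one : critPt β q < 1 := by
  have hneg : critPoly β q 1 < 0 := by
    rw [critPoly]
    nlinarith
  rw [critPoly_eq_mul hβ hq] at hneg
  by_contra! h
  exact hneg.not_ge (mul_nonneg (by linarith) (critPoly_cofactor_pos hβ hq zero_le_one).le)

theorem hBetaDeriv_nonneg {t : ℝ} (ht₀ : 0 ≤ t) (ht : t ≤ critPt β q) :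
    0 ≤ hBetaDeriv β q t := by
  have hpow : 0 ≤ (1 - t) ^ (2 * β - 1) :=
    Real.rpow_nonneg (by linarith [critPt_lt_one hβ hq]) _
  rw [hBetaDeriv, critPoly_eq_mul hβ hq]
  exact mul_nonneg (by positivity)
    (mul_nonneg (by linarith) (critPoly_cofactor_pos hβ hq ht₀).le)

theorem hBetaDeriv_nonpos {t : ℝ} (ht₀ : critPt β q ≤ t) (ht : t ≤ 1) :
    hBetaDeriv β q t ≤ 0 := by
  have hpow : 0 ≤ (1 - t) ^ (2 * β - 1) := Real.rpow_nonneg (by linarith) _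
  rw [hBetaDeriv, critPoly_eq_mul hβ hq]
  exact mul_nonpos_of_nonneg_of_nonpos (by positivity) <| mul_nonpos_of_nonpos_of_nonneg
    (by linarith) (critPoly_cofactor_pos hβ hq ((critPt_pos hβ hq).le.trans ht₀)).le

theorem monotoneOn_hBeta : MonotoneOn (hBeta β q) (Icc 0 (critPt β q)) := by
  have ht₁ := critPt_lt_one hβ hq
  refine monotoneOn_of_hasDerivWithinAt_nonneg (f' := hBetaDeriv β q) (convex_Icc _ _)
    ((continuousOn_hBeta hβ.le hq).mono (Icc_subset_Icc le_rfl ht₁.le))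
    (fun t ht => ?_) (fun t ht => ?_) <;> rw [interior_Icc] at ht
  · exact (hasDerivAt_hBeta (by linarith [ht.2]) (by linarith [ht.1])).hasDerivWithinAt
  · exact hBetaDeriv_nonneg hβ hq ht.1.le ht.2.le

theorem antitoneOn_hBeta : AntitoneOn (hBeta β q) (Icc (critPt β q) 1) := by
  have ht₀ := critPt_pos hβ hq
  refine antitoneOn_of_hasDerivWithinAt_nonpos (f' := hBetaDeriv β q) (convex_Icc _ _)
    ((continuousOn_hBeta hβ.le hq).mono (Icc_subset_Icc ht₀.le le_rfl))
    (fun t ht => ?_) (fun t ht => ?_) <;> rw [interior_Icc] at ht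
  · exact (hasDerivAt_hBeta ht.2 (by linarith [ht.1])).hasDerivWithinAt
  · exact hBetaDeriv_nonpos hβ hq ht.1.le ht.2.le

end CriticalPoint

theorem h_beta_monotone_general (β q : ℝ) (hβ : 0 < β) (hq1 : q < 1) :
    0 < (1 / (4 * β)) *
        (Real.sqrt ((2 * β + 1) ^ 2 * (1 - q) ^ 2 + 8 * β * (1 - q)) -
          (2 * β + 1) * (1 - q)) ∧
    (1 / (4 * β)) *
        (Real.sqrt ((2 * β + 1) ^ 2 * (1 - q) ^ 2 + 8 * β * (1 - q)) -
          (2 * β + 1) * (1 - q)) < 1 ∧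
    MonotoneOn (fun t : ℝ => t * (1 - t) ^ (2 * β) / (t + 1 - q))
      (Set.Icc 0 ((1 / (4 * β)) *
        (Real.sqrt ((2 * β + 1) ^ 2 * (1 - q) ^ 2 + 8 * β * (1 - q)) -
          (2 * β + 1) * (1 - q)))) ∧
    AntitoneOn (fun t : ℝ => t * (1 - t) ^ (2 * β) / (t + 1 - q))
      (Set.Icc ((1 / (4 * β)) *
        (Real.sqrt ((2 * β + 1) ^ 2 * (1 - q) ^ 2 + 8 * β * (1 - q)) -
          (2 * β + 1) * (1 - q))) 1) :=
  ⟨critPt_pos hβ hq1, critPt_lt_one hβ hq1,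
    monotoneOn_hBeta hβ hq1, antitoneOn_hBeta hβ hq1⟩

theorem h_beta_monotone (β q : ℝ) (hβ : 0 < β) (hq0 : 0 < q) (hq1 : q < 1) :
    0 < (1 / (4 * β)) *
        (Real.sqrt ((2 * β + 1) ^ 2 * (1 - q) ^ 2 + 8 * β * (1 - q)) -
          (2 * β + 1) * (1 - q)) ∧
    (1 / (4 * β)) *
        (Real.sqrt ((2 * β + 1) ^ 2 * (1 - q) ^ 2 + 8 * β * (1 - q)) -
          (2 * β + 1) * (1 - q)) < 1 ∧
    MonotoneOn (fun t : ℝ => t * (1 - t) ^ (2 * β) / (t + 1 - q))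
      (Set.Icc 0 ((1 / (4 * β)) *
        (Real.sqrt ((2 * β + 1) ^ 2 * (1 - q) ^ 2 + 8 * β * (1 - q)) -
          (2 * β + 1) * (1 - q)))) ∧
    AntitoneOn (fun t : ℝ => t * (1 - t) ^ (2 * β) / (t + 1 - q))
      (Set.Icc ((1 / (4 * β)) *
        (Real.sqrt ((2 * β + 1) ^ 2 * (1 - q) ^ 2 + 8 * β * (1 - q)) -
          (2 * β + 1) * (1 - q))) 1) :=
  h_beta_monotone_general β q hβ hq1
end

section
/- Let β > 0 and q ∈ (0,1), and set t₀ = (1/(4β))·(√((2β+1)²(1−q)² + 8β(1−q)) − (2β+1)(1−q)). Then q < t₀ if and only if q² − 2(β+1)q + 1 > 0; in particular, if q < β + 1 − √((β+1)² − 1) then q < t₀. -/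
/-!
`t₀` is the positive root of `p(t) = 2β t² + (2β+1)(1-q) t - (1-q)`, and `q ≥ 0` lies to the right of the
vertex of this upward parabola, so `q < t₀` iff `p(q) < 0`; expanding, `p(q) = -(q² - 2(β+1)q + 1)`.
The sufficient condition says that `q` lies below the smaller root `β + 1 - √((β+1)² - 1)` of this last quadratic.
-/

open Real

lemma lt_quadratic_root_iff {a b c x : ℝ} (ha : 0 < a) (hx : 0 ≤ 2 * a * x + b) :
    x < (√(b ^ 2 - 4 * a * c) - b) / (2 * a) ↔ a * x ^ 2 + b * x + c < 0 := by
  rw [lt_div_iff₀ (by positivity), lt_sub_iff_add_lt, lt_sqrt (by linarith)]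
  constructor <;> intro h <;> nlinarith

lemma lt_sq_sub_of_lt_sub_sqrt {p d x : ℝ} (h : x < p - √d) : d < (p - x) ^ 2 := by
  have hpos : 0 < p - x := by linarith [sqrt_nonneg d]
  exact (sqrt_lt' hpos).mp (by linarith)

theorem q_lt_t0_iff (β q : ℝ) (hβ : 0 < β) (hq0 : 0 < q) (hq1 : q < 1) :
    (q < (1 / (4 * β)) *
        (Real.sqrt ((2 * β + 1) ^ 2 * (1 - q) ^ 2 + 8 * β * (1 - q)) -
          (2 * β + 1) * (1 - q)) ↔
      q ^ 2 - 2 * (β + 1) * q + 1 > 0) ∧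
    (q < β + 1 - Real.sqrt ((β + 1) ^ 2 - 1) →
      q < (1 / (4 * β)) *
        (Real.sqrt ((2 * β + 1) ^ 2 * (1 - q) ^ 2 + 8 * β * (1 - q)) -
          (2 * β + 1) * (1 - q))) := by
  have ht₀ : (1 / (4 * β)) * (√((2 * β + 1) ^ 2 * (1 - q) ^ 2 + 8 * β * (1 - q)) -
      (2 * β + 1) * (1 - q)) = (√(((2 * β + 1) * (1 - q)) ^ 2 - 4 * (2 * β) * (-(1 - q))) -
        (2 * β + 1) * (1 - q)) / (2 * (2 * β)) := by
    ring_nf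
  have hvertex : 0 ≤ 2 * (2 * β) * q + (2 * β + 1) * (1 - q) := by nlinarith
  have key : q < (1 / (4 * β)) * (√((2 * β + 1) ^ 2 * (1 - q) ^ 2 + 8 * β * (1 - q)) -
      (2 * β + 1) * (1 - q)) ↔ q ^ 2 - 2 * (β + 1) * q + 1 > 0 := by
    rw [ht₀, lt_quadratic_root_iff (by positivity) hvertex]
    constructor <;> intro h <;> linarith
  refine ⟨key, fun h => key.mpr ?_⟩
  linarith [lt_sq_sub_of_lt_sub_sqrt h]
end

section
/- Let n ≥ 1 and let X, Y be n×n complex matrices such that X is positive semidefinite, Y is positive definite, and Y − X is positive semidefinite. Then Tr(X·Y⁻¹·X) ≤ Tr X. -/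
open scoped ComplexOrder

/-!
The block matrix `[[Y, X], [X, X]]` is the sum of `[[Y - X, 0], [0, 0]]` and `[[X, X], [X, X]]`,
both congruent to positive semidefinite matrices, so it is positive semidefinite. Its Schur
complement with respect to the positive definite block `Y` is `X - X Y⁻¹ X`, which is therefore
positive semidefinite and has nonnegative trace.
-/

namespace Matrix

variable {m n p R : Type*}

theorem PosSemidef.fromBlocks_conjTranspose_mul_mul [Ring R] [PartialOrder R] [StarRing R]
    [Fintype m] [Finite n] [Finite p] {A : Matrix m m R} (hA : A.PosSemidef)
    (S : Matrix m n R) (T : Matrix m p R) :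
    (fromBlocks (Sᴴ * A * S) (Sᴴ * A * T) (Tᴴ * A * S) (Tᴴ * A * T)).PosSemidef := by
  have := Fintype.ofFinite n
  have := Fintype.ofFinite p
  simpa [conjTranspose_fromCols_eq_fromRows_conjTranspose, fromRows_mul, fromRows_mul_fromCols]
    using hA.conjTranspose_mul_mul_same (fromCols S T)

variable [Fintype m] [DecidableEq m]

theorem PosSemidef.fromBlocks_of_sub [Ring R] [PartialOrder R] [StarRing R] [AddLeftMono R]
    {X Y : Matrix m m R} (hX : X.PosSemidef) (hYX : (Y - X).PosSemidef) :
    (fromBlocks Y X X X).PosSemidef := by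
  have hBlock := (hYX.fromBlocks_conjTranspose_mul_mul (1 : Matrix m m R) (0 : Matrix m m R)).add
    (hX.fromBlocks_conjTranspose_mul_mul (1 : Matrix m m R) 1)
  simpa [fromBlocks_add] using hBlock

theorem PosSemidef.sub_mul_inv_mul [Field R] [PartialOrder R] [StarRing R] [StarOrderedRing R]
    {X Y : Matrix m m R} (hX : X.PosSemidef) (hY : Y.PosDef) (hYX : (Y - X).PosSemidef) :
    (X - X * Y⁻¹ * X).PosSemidef := by
  have := hY.isUnit.invertible
  have schur := (PosDef.fromBlocks₁₁ X X hY).mp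
  rw [hX.1] at schur
  exact schur (hX.fromBlocks_of_sub hYX)

end Matrix

theorem trace_X_inv_Y_X_le_general {n : ℕ} (X Y : Matrix (Fin n) (Fin n) ℂ)
    (hX : X.PosSemidef) (hY : Y.PosDef) (hYX : (Y - X).PosSemidef) :
    (X * Y⁻¹ * X).trace ≤ X.trace := by
  have h := (hX.sub_mul_inv_mul hY hYX).trace_nonneg
  rwa [Matrix.trace_sub, sub_nonneg] at h

theorem trace_X_inv_Y_X_le {n : ℕ} (hn : 1 ≤ n) (X Y : Matrix (Fin n) (Fin n) ℂ)
    (hX : X.PosSemidef) (hY : Y.PosDef) (hYX : (Y - X).PosSemidef) :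
    (X * Y⁻¹ * X).trace ≤ X.trace :=
  trace_X_inv_Y_X_le_general X Y hX hY hYX
end
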